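/- arXiv:1909.05112 — 7 statements merged into one kernel-verified Lean document; each statement's English description precedes it below -/
import Mathlib

section
/- For every real number x and every ρ ∈ (0,1], one has |x(e^x - 1 - x)| ≤ 2|x|^{2+ρ} e^{max(x,0)}. -/
/-! The remainder `e^x - 1 - x` is at most `x²` for `|x| ≤ 1` and at most `|x| e^{x⁺}` for all `x`;
for `0 ≤ ρ ≤ 1` the power `|x|^{1+ρ}` dominates `x²` on `[-1, 1]` and `|x|` outside it. -/

open Real

namespace Real

lemma exp_sub_one_sub_nonneg (x : ℝ) : 0 ≤ exp x - 1 - x := by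
  linarith [add_one_le_exp x]

lemma exp_sub_one_sub_le_abs_mul_exp_max (x : ℝ) : exp x - 1 - x ≤ |x| * exp (max x 0) := by
  rcases le_or_gt 0 x with hx | hx
  · rw [abs_of_nonneg hx, max_eq_left hx]
    have h : exp x * (1 - x) ≤ 1 := by
      calc exp x * (1 - x) ≤ exp x * exp (-x) := by
            gcongr; linarith [add_one_le_exp (-x)]
        _ = 1 := by rw [← exp_add, add_neg_cancel, exp_zero]
    nlinarith
  · rw [abs_of_neg hx, max_eq_right hx.le, exp_zero, mul_one]
    linarith [exp_le_one_iff.mpr hx.le]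

lemma abs_exp_sub_one_sub_le_rpow_mul_exp_max (x : ℝ) {ρ : ℝ} (hρ0 : 0 ≤ ρ) (hρ1 : ρ ≤ 1) :
    |exp x - 1 - x| ≤ |x| ^ (1 + ρ) * exp (max x 0) := by
  rw [abs_of_nonneg (exp_sub_one_sub_nonneg x)]
  rcases le_or_gt |x| 1 with hx | hx
  · calc exp x - 1 - x ≤ |x| ^ (2 : ℝ) := by
          rw [rpow_two, sq_abs, ← abs_of_nonneg (exp_sub_one_sub_nonneg x)]
          exact abs_exp_sub_one_sub_id_le hx
      _ ≤ |x| ^ (1 + ρ) := rpow_le_rpow_of_exponent_ge' (abs_nonneg x) hx (by linarith) (by linarith)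
      _ ≤ |x| ^ (1 + ρ) * exp (max x 0) :=
          le_mul_of_one_le_right (by positivity) (one_le_exp (le_max_right x 0))
  · calc exp x - 1 - x ≤ |x| * exp (max x 0) := exp_sub_one_sub_le_abs_mul_exp_max x
      _ ≤ |x| ^ (1 + ρ) * exp (max x 0) := by
          gcongr
          simpa using rpow_le_rpow_of_exponent_le hx.le (by linarith : (1 : ℝ) ≤ 1 + ρ)

end Real

theorem abs_mul_exp_sub_one_sub_le (x ρ : ℝ) (hρ0 : 0 < ρ) (hρ1 : ρ ≤ 1) :
    |x * (Real.exp x - 1 - x)| ≤ 2 * |x| ^ (2 + ρ) * Real.exp (max x 0) := by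
  have hpow : |x| ^ (2 + ρ) = |x| * |x| ^ (1 + ρ) := by
    rw [show 2 + ρ = 1 + (1 + ρ) by ring, rpow_add' (abs_nonneg x) (by linarith), rpow_one]
  calc |x * (exp x - 1 - x)| = |x| * |exp x - 1 - x| := abs_mul _ _
    _ ≤ |x| * (|x| ^ (1 + ρ) * exp (max x 0)) :=
        mul_le_mul_of_nonneg_left (abs_exp_sub_one_sub_le_rpow_mul_exp_max x hρ0.le hρ1) (abs_nonneg x)
    _ = |x| ^ (2 + ρ) * exp (max x 0) := by rw [hpow, mul_assoc]
    _ ≤ 2 * |x| ^ (2 + ρ) * exp (max x 0) := by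
        rw [mul_assoc]
        exact le_mul_of_one_le_left (by positivity) one_le_two
end

section
/- For every real number x and every ρ ∈ (0,1], one has |e^x - 1 - x - x²/2| ≤ |x|^{2+ρ} e^{max(x,0)}. -/
/-! For `|x| ≤ 1` the third-order Taylor bound gives `|x|³`, and for `|x| ≥ 1` the crude bound
`x² e^{x⁺}` suffices; since `|x|^{2+ρ}` dominates `|x|³` in the first regime and `x²` in the
second, the two combine. -/

open Real

namespace Real

theorem abs_exp_sub_one_sub_sub_sq_le_abs_pow_three {x : ℝ} (hx : |x| ≤ 1) :
    |exp x - 1 - x - x ^ 2 / 2| ≤ |x| ^ 3 := by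
  have h := exp_bound hx (n := 3) (by norm_num)
  norm_num [Finset.sum_range_succ, Nat.factorial, ← sub_sub] at h
  exact h.trans (mul_le_of_le_one_right (by positivity) (by norm_num))

theorem abs_exp_sub_one_sub_sub_sq_le_sq_mul_exp_max {x : ℝ} (hx : 1 ≤ |x|) :
    |exp x - 1 - x - x ^ 2 / 2| ≤ x ^ 2 * exp (max x 0) := by
  rcases le_total 0 x with hx0 | hx0
  · rw [abs_of_nonneg hx0] at hx
    rw [max_eq_left hx0, abs_of_nonneg (by linarith [quadratic_le_exp_of_nonneg hx0])]
    have : exp x ≤ x ^ 2 * exp x := le_mul_of_one_le_left (exp_pos x).le (by nlinarith)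
    linarith [sq_nonneg x]
  · rw [abs_of_nonpos hx0] at hx
    rw [max_eq_right hx0, exp_zero, mul_one, abs_le]
    constructor <;> nlinarith [exp_pos x, exp_le_one_iff.2 hx0]

end Real

theorem abs_exp_sub_one_sub_sub_sq_le (x ρ : ℝ) (hρ0 : 0 < ρ) (hρ1 : ρ ≤ 1) :
    |Real.exp x - 1 - x - x ^ 2 / 2| ≤ |x| ^ (2 + ρ) * Real.exp (max x 0) := by
  have hexp : 1 ≤ exp (max x 0) := one_le_exp (le_max_right x 0)
  rcases le_total |x| 1 with hx | hx
  · calc |exp x - 1 - x - x ^ 2 / 2| ≤ |x| ^ (3 : ℝ) := by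
          exact_mod_cast abs_exp_sub_one_sub_sub_sq_le_abs_pow_three hx
      _ ≤ |x| ^ (2 + ρ) :=
          rpow_le_rpow_of_exponent_ge' (abs_nonneg x) hx (by positivity) (by linarith)
      _ ≤ |x| ^ (2 + ρ) * exp (max x 0) := le_mul_of_one_le_right (by positivity) hexp
  · calc |exp x - 1 - x - x ^ 2 / 2| ≤ |x| ^ (2 : ℝ) * exp (max x 0) := by
          rw [rpow_two, sq_abs]
          exact abs_exp_sub_one_sub_sub_sq_le_sq_mul_exp_max hx
      _ ≤ |x| ^ (2 + ρ) * exp (max x 0) := by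
          gcongr
          linarith
end

section
/- Let ξ be a real random variable, 𝒢 a sub-σ-field, ε > 0 and s > 2. If E[|ξ|^s e^{ξ⁺/ε} | 𝒢] ≤ ε^{s-2} E[ξ² | 𝒢] almost surely, then E[ξ² | 𝒢] ≤ ε² almost surely. -/
/-!
By weighted AM-GM (Young's inequality with exponents `s/2` and `s/(s-2)`),
`x² ≤ (2/s) ε^(2-s) |x|^s + (1 - 2/s) ε²`, and the factor `e^(x⁺/ε) ≥ 1` may be inserted on the
right. Taking conditional expectations and using the hypothesis, `Y = E[ξ² | 𝒢]` satisfies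
`Y ≤ (2/s) Y + (1 - 2/s) ε²`, i.e. `Y ≤ ε²` since `s > 2`.
-/

open MeasureTheory

theorem sq_le_two_div_mul_abs_rpow_add_one_sub {s : ℝ} (hs : 2 ≤ s) (t : ℝ) :
    t ^ 2 ≤ 2 / s * |t| ^ s + (1 - 2 / s) := by
  have hs0 : 0 < s := by linarith
  have hw : 2 / s ≤ 1 := (div_le_one hs0).2 hs
  have amgm := Real.geom_mean_le_arith_mean2_weighted (by positivity) (sub_nonneg.2 hw)
    (Real.rpow_nonneg (abs_nonneg t) s) zero_le_one (add_sub_cancel _ _)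
  rwa [Real.one_rpow, mul_one, mul_one, ← Real.rpow_mul (abs_nonneg t), mul_div_cancel₀ _ hs0.ne',
    Real.rpow_two, sq_abs] at amgm

theorem sq_le_two_div_mul_rpow_mul_abs_rpow_add {ε s : ℝ} (hε : 0 < ε) (hs : 2 ≤ s) (x : ℝ) :
    x ^ 2 ≤ 2 / s * ε ^ (2 - s) * |x| ^ s + (1 - 2 / s) * ε ^ 2 := by
  have h := mul_le_mul_of_nonneg_right (sq_le_two_div_mul_abs_rpow_add_one_sub hs (x / ε))
    (sq_nonneg ε)
  rw [abs_div, abs_of_pos hε, Real.div_rpow (abs_nonneg x) hε.le] at h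
  rw [Real.rpow_sub hε, Real.rpow_two]
  calc x ^ 2 = (x / ε) ^ 2 * ε ^ 2 := by rw [div_pow, div_mul_cancel₀ _ (pow_ne_zero 2 hε.ne')]
    _ ≤ _ := h
    _ = _ := by ring

theorem condExp_ae_le_const_mul_add {Ω : Type*} {m m0 : MeasurableSpace Ω} {μ : Measure Ω}
    [IsFiniteMeasure μ] (hm : m ≤ m0) {f g : Ω → ℝ} (hf : Integrable f μ) (hg : Integrable g μ)
    (c d : ℝ) (hfg : f ≤ᵐ[μ] fun ω => c * g ω + d) :
    μ[f|m] ≤ᵐ[μ] fun ω => c * μ[g|m] ω + d := by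
  have hcg : Integrable (fun ω => c * g ω) μ := hg.const_mul c
  have hlin : μ[fun ω => c * g ω + d|m] =ᵐ[μ] fun ω => c * μ[g|m] ω + d := by
    have hsmul : μ[fun ω => c * g ω|m] =ᵐ[μ] fun ω => c * μ[g|m] ω := condExp_smul c g m
    filter_upwards [condExp_add hcg (integrable_const d) m, hsmul] with ω hadd hmul
    rw [← Pi.add_def, hadd, Pi.add_apply, condExp_const hm, hmul]
  exact (condExp_mono hf (hcg.add (integrable_const d)) hfg).trans_eq hlin

theorem condExp_sq_le_of_sakhanenko
    {Ω : Type*} {m0 : MeasurableSpace Ω} (μ : Measure Ω) [IsProbabilityMeasure μ]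
    (G : MeasurableSpace Ω) (hG : G ≤ m0)
    (ξ : Ω → ℝ) (ε s : ℝ) (hε : 0 < ε) (hs : 2 < s)
    (hint1 : Integrable (fun ω => (ξ ω) ^ 2) μ)
    (hint2 : Integrable (fun ω => |ξ ω| ^ s * Real.exp (max (ξ ω) 0 / ε)) μ)
    (hyp : ∀ᵐ ω ∂μ,
      (μ[fun ω => |ξ ω| ^ s * Real.exp (max (ξ ω) 0 / ε)|G]) ω
        ≤ ε ^ (s - 2) * (μ[fun ω => (ξ ω) ^ 2|G]) ω) :
    ∀ᵐ ω ∂μ, (μ[fun ω => (ξ ω) ^ 2|G]) ω ≤ ε ^ 2 := by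
  have hs0 : 0 < s := by linarith
  set c := 2 / s * ε ^ (2 - s)
  have hc : 0 ≤ c := by positivity
  have hpt : ∀ ω, ξ ω ^ 2 ≤ c * (|ξ ω| ^ s * Real.exp (max (ξ ω) 0 / ε)) + (1 - 2 / s) * ε ^ 2 :=
    fun ω => (sq_le_two_div_mul_rpow_mul_abs_rpow_add hε hs.le (ξ ω)).trans <| by
      gcongr
      exact le_mul_of_one_le_right (by positivity) (Real.one_le_exp (by positivity))
  filter_upwards [condExp_ae_le_const_mul_add hG hint1 hint2 c _ (ae_of_all _ hpt), hyp]
    with ω hY hF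
  set Y := μ[fun ω => ξ ω ^ 2|G] ω
  have hcF : c * μ[fun ω => |ξ ω| ^ s * Real.exp (max (ξ ω) 0 / ε)|G] ω ≤ 2 / s * Y :=
    calc _ ≤ c * (ε ^ (s - 2) * Y) := mul_le_mul_of_nonneg_left hF hc
      _ = 2 / s * (ε ^ (2 - s) * ε ^ (s - 2)) * Y := by ring
      _ = 2 / s * Y := by
        rw [← Real.rpow_add hε, sub_add_sub_cancel', sub_self, Real.rpow_zero, mul_one]
  have hw : 0 < 1 - 2 / s := sub_pos.2 ((div_lt_one hs0).2 hs)
  exact le_of_mul_le_mul_left (by linarith) hw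
end

section
/- For every x ≥ 0, the standard normal tail satisfies 1 − Φ(x) ≤ e^{-x²/2} / (√π (1+x)). -/
/-!
With `B y = exp (-y²/2) / (√π (1 + y))` and `φ` the standard normal density, `φ ≤ -B'` on
`(-1, ∞)`: this reduces to `(1 + y)² ≤ √2 (y² + y + 1)`, a quadratic inequality whose
discriminant `4√2 - 6` is negative. Since `B → 0` at infinity, integrating over `(x, ∞)` gives
`1 - Φ x = ∫_x^∞ φ ≤ B x`.
-/

noncomputable def stdNormalCDF (x : ℝ) : ℝ :=
  (Real.sqrt (2 * Real.pi))⁻¹ * ∫ t in Set.Iic x, Real.exp (-t ^ 2 / 2)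

open Real MeasureTheory Set Filter Topology

theorem setIntegral_Ioi_le_of_hasDerivAt {f g g' : ℝ → ℝ} {a : ℝ}
    (hderiv : ∀ x ∈ Ici a, HasDerivAt g (g' x) x) (hg : Tendsto g atTop (𝓝 0))
    (hf : IntegrableOn f (Ioi a)) (hf_nonneg : ∀ x ∈ Ioi a, 0 ≤ f x)
    (hfg : ∀ x ∈ Ioi a, f x ≤ -g' x) :
    ∫ x in Ioi a, f x ≤ g a := by
  have hg'_nonpos : ∀ x ∈ Ioi a, g' x ≤ 0 := fun x hx => by
    linarith [hf_nonneg x hx, hfg x hx]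
  calc ∫ x in Ioi a, f x
      ≤ ∫ x in Ioi a, -g' x :=
        setIntegral_mono_on hf
          (integrableOn_Ioi_deriv_of_nonpos' hderiv hg'_nonpos hg).neg measurableSet_Ioi hfg
    _ = g a := by
        rw [integral_neg, integral_Ioi_of_hasDerivAt_of_nonpos' hderiv hg'_nonpos hg]
        ring

theorem integrable_exp_neg_sq_div_two : Integrable fun t : ℝ => exp (-t ^ 2 / 2) := by
  simpa [neg_div, div_eq_inv_mul] using integrable_exp_neg_mul_sq (b := 2⁻¹) (by norm_num)

theorem integral_exp_neg_sq_div_two : ∫ t : ℝ, exp (-t ^ 2 / 2) = √(2 * π) := by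
  simpa [neg_div, div_eq_inv_mul, mul_comm] using integral_gaussian 2⁻¹

theorem one_sub_stdNormalCDF (x : ℝ) :
    1 - stdNormalCDF x = (√(2 * π))⁻¹ * ∫ t in Ioi x, exp (-t ^ 2 / 2) := by
  have hsplit := intervalIntegral.integral_Iic_add_Ioi (b := x)
    integrable_exp_neg_sq_div_two.integrableOn integrable_exp_neg_sq_div_two.integrableOn
  rw [integral_exp_neg_sq_div_two] at hsplit
  have : √(2 * π) ≠ 0 := by positivity
  rw [stdNormalCDF, ← sub_eq_of_eq_add' hsplit.symm]
  field_simp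

theorem sq_one_add_le_sqrt_two_mul (y : ℝ) : (1 + y) ^ 2 ≤ √2 * (y ^ 2 + y + 1) := by
  have h2 : √2 ^ 2 = 2 := sq_sqrt (by norm_num)
  have hlo : 1.4 ≤ √2 := by nlinarith [sqrt_nonneg 2]
  have hhi : √2 ≤ 1.5 := by nlinarith [sqrt_nonneg 2]
  nlinarith [sq_nonneg (2 * y + 1), sq_nonneg (y - 1)]

noncomputable def gaussianTailBound (y : ℝ) : ℝ := exp (-y ^ 2 / 2) / (√π * (1 + y))

theorem hasDerivAt_gaussianTailBound {y : ℝ} (hy : 1 + y ≠ 0) :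
    HasDerivAt gaussianTailBound
      (-(exp (-y ^ 2 / 2) * (y ^ 2 + y + 1) / (√π * (1 + y) ^ 2))) y := by
  have hexp : HasDerivAt (fun z : ℝ => exp (-z ^ 2 / 2)) (exp (-y ^ 2 / 2) * -y) y := by
    refine ((hasDerivAt_pow 2 y).neg.div_const 2).exp.congr_deriv ?_
    simp only [Pi.neg_apply]
    ring
  have hden : HasDerivAt (fun z : ℝ => √π * (1 + z)) √π y := by
    simpa using ((hasDerivAt_id y).const_add 1).const_mul √π
  have hπ : √π ≠ 0 := (sqrt_pos.2 pi_pos).ne'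
  refine (hexp.div hden (mul_ne_zero hπ hy)).congr_deriv ?_
  field_simp
  ring

theorem tendsto_gaussianTailBound_atTop : Tendsto gaussianTailBound atTop (𝓝 0) := by
  have hexp : Tendsto (fun y : ℝ => exp (-y ^ 2 / 2)) atTop (𝓝 0) := by
    rw [tendsto_exp_comp_nhds_zero]
    exact (tendsto_neg_atTop_atBot.comp (tendsto_pow_atTop two_ne_zero)).atBot_div_const two_pos
  refine hexp.div_atTop (Tendsto.const_mul_atTop (sqrt_pos.2 pi_pos) ?_)
  exact tendsto_atTop_add_const_left atTop 1 tendsto_id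

theorem gaussianDensity_le_neg_deriv_gaussianTailBound {y : ℝ} (hy : -1 < y) :
    (√(2 * π))⁻¹ * exp (-y ^ 2 / 2) ≤ exp (-y ^ 2 / 2) * (y ^ 2 + y + 1) / (√π * (1 + y) ^ 2) := by
  have hπ : 0 < √π := sqrt_pos.2 pi_pos
  have hy' : 0 < 1 + y := by linarith
  rw [sqrt_mul zero_le_two, inv_mul_eq_div, div_le_div_iff₀ (by positivity) (by positivity)]
  have := mul_le_mul_of_nonneg_left (sq_one_add_le_sqrt_two_mul y)
    (by positivity : 0 ≤ exp (-y ^ 2 / 2) * √π)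
  linarith

theorem one_sub_stdNormalCDF_le_gaussianTailBound {x : ℝ} (hx : -1 < x) :
    1 - stdNormalCDF x ≤ gaussianTailBound x := by
  have hderiv : ∀ y ∈ Ici x, HasDerivAt gaussianTailBound
      (-(exp (-y ^ 2 / 2) * (y ^ 2 + y + 1) / (√π * (1 + y) ^ 2))) y :=
    fun y hy => hasDerivAt_gaussianTailBound (by linarith [mem_Ici.1 hy])
  have htail := setIntegral_Ioi_le_of_hasDerivAt (f := fun t => (√(2 * π))⁻¹ * exp (-t ^ 2 / 2))
    hderiv tendsto_gaussianTailBound_atTop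
    (integrable_exp_neg_sq_div_two.const_mul _).integrableOn (fun _ _ => by positivity)
    (fun y hy => by
      rw [neg_neg]
      exact gaussianDensity_le_neg_deriv_gaussianTailBound (hx.trans (mem_Ioi.1 hy)))
  rwa [integral_const_mul, ← one_sub_stdNormalCDF] at htail

theorem gaussian_tail_upper_bound (x : ℝ) (hx : 0 ≤ x) :
    1 - stdNormalCDF x ≤ Real.exp (-x ^ 2 / 2) / (Real.sqrt Real.pi * (1 + x)) :=
  one_sub_stdNormalCDF_le_gaussianTailBound (by linarith)
end

section
/- Let ξ be a real random variable with E[ξ | 𝒢] = 0 satisfying E[|ξ|^{2+ρ} e^{ξ⁺/ε} | 𝒢] ≤ ε^ρ E[ξ² | 𝒢] a.s. for some ρ ∈ (0,1] and ε > 0. Then for every λ with 0 ≤ λ ≤ 1/ε, E[e^{λξ} | 𝒢] ≤ 1 + (λ²/2 + λ^{2+ρ} ε^ρ) E[ξ² | 𝒢] ≤ 1 + 2(λε)² almost surely. -/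
/-! Pointwise, `exp x ≤ 1 + x + x² / 2 + |x| ^ (2 + ρ) * exp x⁺`: for `|x| ≤ 1` this is the cubic
Taylor remainder together with `|x|³ ≤ |x| ^ (2 + ρ)`, and for `|x| > 1` the last term alone
dominates, since there `x² ≤ |x| ^ (2 + ρ)`. At `x = λ ξ` with `λ ≤ 1 / ε` the weight `exp (λ ξ)⁺`
is at most `exp (ξ⁺ / ε)`, so conditioning on `𝒢`, using `E[ξ | 𝒢] = 0` and the moment condition
gives the first bound. For the second, Young's inequality
`(2 + ρ) ε ^ ρ ξ² ≤ 2 |ξ| ^ (2 + ρ) + ρ ε ^ (2 + ρ)` turns the moment condition into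
`E[ξ² | 𝒢] ≤ ε²`, and `(λ ε) ^ ρ ≤ 1` gives `λ ^ (2 + ρ) ε ^ ρ ≤ λ²`. -/

open MeasureTheory

namespace Real

theorem exp_le_quadratic_add_abs_rpow_mul_exp_max {ρ : ℝ} (hρ0 : 0 ≤ ρ) (hρ1 : ρ ≤ 1) (x : ℝ) :
    exp x ≤ 1 + x + x ^ 2 / 2 + |x| ^ (2 + ρ) * exp (max x 0) := by
  have hexp_max : 1 ≤ exp (max x 0) := one_le_exp (le_max_right x 0)
  rcases le_or_gt |x| 1 with hx | hx
  · have hcubic : exp x - (1 + x + x ^ 2 / 2) ≤ |x| ^ 3 := by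
      have hb := (abs_le.1 (exp_bound hx (n := 3) (by norm_num))).2
      norm_num [Finset.sum_range_succ, Nat.factorial] at hb
      nlinarith [pow_nonneg (abs_nonneg x) 3]
    have hrpow : |x| ^ 3 ≤ |x| ^ (2 + ρ) := by
      rw [← rpow_natCast]
      exact rpow_le_rpow_of_exponent_ge' (abs_nonneg x) hx (by positivity) (by push_cast; linarith)
    nlinarith [rpow_nonneg (abs_nonneg x) (2 + ρ)]
  · have hsq : x ^ 2 ≤ |x| ^ (2 + ρ) := by
      rw [← sq_abs, ← rpow_two]
      exact rpow_le_rpow_of_exponent_le hx.le (by linarith)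
    rcases le_or_gt x 0 with hx0 | hx0
    · have : exp x ≤ 1 := exp_le_one_iff.2 hx0
      rw [abs_of_nonpos hx0] at hx
      nlinarith
    · rw [max_eq_left hx0.le]
      rw [abs_of_pos hx0] at hx
      have : exp x ≤ |x| ^ (2 + ρ) * exp x :=
        le_mul_of_one_le_left (exp_pos x).le (by nlinarith)
      nlinarith

theorem two_add_mul_rpow_mul_sq_le {ρ ε : ℝ} (hρ : 0 < ρ) (hε : 0 ≤ ε) (y : ℝ) :
    (2 + ρ) * (ε ^ ρ * y ^ 2) ≤ 2 * |y| ^ (2 + ρ) + ρ * ε ^ (2 + ρ) := by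
  have hpq : ((2 + ρ) / 2).HolderConjugate ((2 + ρ) / ρ) := by
    simpa only [inv_div] using
      HolderConjugate.inv_inv (a := 2 / (2 + ρ)) (b := ρ / (2 + ρ)) (by positivity) (by positivity)
        (by field_simp)
  have hyoung := young_inequality_of_nonneg (sq_nonneg y) (rpow_nonneg hε ρ) hpq
  rw [← sq_abs, ← rpow_natCast, ← rpow_mul (abs_nonneg y), ← rpow_mul hε] at hyoung
  rw [← sq_abs]
  have hexp_y : ((2 : ℕ) : ℝ) * ((2 + ρ) / 2) = 2 + ρ := by push_cast; ring
  have hexp_ε : ρ * ((2 + ρ) / ρ) = 2 + ρ := by field_simp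
  rw [hexp_y, hexp_ε, rpow_natCast] at hyoung
  calc (2 + ρ) * (ε ^ ρ * |y| ^ 2) = (2 + ρ) * (|y| ^ 2 * ε ^ ρ) := by ring
    _ ≤ (2 + ρ) * (|y| ^ (2 + ρ) / ((2 + ρ) / 2) + ε ^ (2 + ρ) / ((2 + ρ) / ρ)) := by
        gcongr
    _ = _ := by field_simp

theorem rpow_two_add_mul_rpow_le_sq {ρ lam ε : ℝ} (hρ : 0 ≤ ρ) (hlam : 0 ≤ lam) (hε : 0 ≤ ε)
    (h : lam * ε ≤ 1) : lam ^ (2 + ρ) * ε ^ ρ ≤ lam ^ 2 := by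
  rw [rpow_add' hlam (by positivity), mul_assoc, ← mul_rpow hlam hε, rpow_two]
  exact mul_le_of_le_one_right (sq_nonneg lam) (rpow_le_one (by positivity) h hρ)

end Real

namespace MeasureTheory

variable {Ω : Type*} {m m0 : MeasurableSpace Ω} {μ : Measure Ω} {f g ξ : Ω → ℝ}

theorem condExp_add_const_mul (hf : Integrable f μ) (hg : Integrable g μ) (a : ℝ) :
    μ[fun ω => f ω + a * g ω|m] =ᵐ[μ] fun ω => μ[f|m] ω + a * μ[g|m] ω := by
  filter_upwards [condExp_add hf (hg.const_mul a) m, condExp_smul a g m] with ω hadd hsmul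
  simp only [Pi.add_apply, Pi.smul_apply, smul_eq_mul] at hadd hsmul
  rw [← hsmul]
  exact hadd

theorem condExp_le_const_add_mul_of_le [IsFiniteMeasure μ] (hm : m ≤ m0) (hf : Integrable f μ)
    (hg : Integrable g μ) {c a : ℝ} (h : ∀ ω, f ω ≤ c + a * g ω) :
    ∀ᵐ ω ∂μ, μ[f|m] ω ≤ c + a * μ[g|m] ω := by
  have hub : Integrable (fun ω => c + a * g ω) μ := (integrable_const c).add (hg.const_mul a)
  filter_upwards [condExp_mono (m := m) hf hub (ae_of_all μ h),
    condExp_add_const_mul (m := m) (integrable_const c) hg a] with ω hmono hlin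
  rwa [hlin, condExp_const hm] at hmono

theorem condExp_sq_le_sq_of_condExp_rpow_le [IsFiniteMeasure μ] (hm : m ≤ m0) {ρ ε : ℝ}
    (hρ : 0 < ρ) (hε : 0 < ε) (hsq : Integrable (fun ω => ξ ω ^ 2) μ) (hg : Integrable g μ)
    (hξg : ∀ ω, |ξ ω| ^ (2 + ρ) ≤ g ω)
    (hgsq : ∀ᵐ ω ∂μ, μ[g|m] ω ≤ ε ^ ρ * μ[fun ω => ξ ω ^ 2|m] ω) :
    ∀ᵐ ω ∂μ, μ[fun ω => ξ ω ^ 2|m] ω ≤ ε ^ 2 := by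
  have hερ : 0 < ε ^ ρ := Real.rpow_pos_of_pos hε ρ
  have hyoung : ∀ ω, ξ ω ^ 2 ≤ ρ / (2 + ρ) * ε ^ 2 + 2 / ((2 + ρ) * ε ^ ρ) * g ω := by
    intro ω
    have hε2ρ : ε ^ (2 + ρ) = ε ^ 2 * ε ^ ρ := by rw [Real.rpow_add hε, Real.rpow_two]
    have hpos : 0 < (2 + ρ) * ε ^ ρ := by positivity
    refine le_of_mul_le_mul_left ?_ hpos
    calc (2 + ρ) * ε ^ ρ * ξ ω ^ 2 ≤ 2 * |ξ ω| ^ (2 + ρ) + ρ * ε ^ (2 + ρ) := by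
          linarith [Real.two_add_mul_rpow_mul_sq_le hρ hε.le (ξ ω)]
      _ ≤ 2 * g ω + ρ * (ε ^ 2 * ε ^ ρ) := by rw [hε2ρ]; linarith [hξg ω]
      _ = _ := by field_simp; ring
  filter_upwards [condExp_le_const_add_mul_of_le hm hsq hg hyoung, hgsq] with ω hbound hmoment
  have hmoment' : 2 / ((2 + ρ) * ε ^ ρ) * μ[g|m] ω ≤ 2 / (2 + ρ) * μ[fun ω => ξ ω ^ 2|m] ω := by
    calc _ ≤ 2 / ((2 + ρ) * ε ^ ρ) * (ε ^ ρ * μ[fun ω => ξ ω ^ 2|m] ω) := by gcongr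
      _ = _ := by field_simp
  have hscaled : ρ / (2 + ρ) * μ[fun ω => ξ ω ^ 2|m] ω ≤ ρ / (2 + ρ) * ε ^ 2 := by
    have hweights : 2 / (2 + ρ) = 1 - ρ / (2 + ρ) := by field_simp; ring
    rw [hweights] at hmoment'
    linarith
  exact le_of_mul_le_mul_left hscaled (by positivity)

theorem condExp_exp_const_mul_le [IsFiniteMeasure μ] (hm : m ≤ m0) {ρ lam : ℝ} (hρ0 : 0 ≤ ρ)
    (hρ1 : ρ ≤ 1) (hlam : 0 ≤ lam) (hξ : Integrable ξ μ) (hsq : Integrable (fun ω => ξ ω ^ 2) μ)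
    (hg : Integrable g μ) (hexp : Integrable (fun ω => Real.exp (lam * ξ ω)) μ)
    (hξg : ∀ ω, |ξ ω| ^ (2 + ρ) * Real.exp (max (lam * ξ ω) 0) ≤ g ω) :
    ∀ᵐ ω ∂μ, μ[fun ω => Real.exp (lam * ξ ω)|m] ω ≤
      1 + lam * μ[ξ|m] ω + lam ^ 2 / 2 * μ[fun ω => ξ ω ^ 2|m] ω + lam ^ (2 + ρ) * μ[g|m] ω := by
  have hpointwise : ∀ ω, Real.exp (lam * ξ ω) ≤
      1 + lam * ξ ω + lam ^ 2 / 2 * ξ ω ^ 2 + lam ^ (2 + ρ) * g ω := by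
    intro ω
    have hrem : |lam * ξ ω| ^ (2 + ρ) = lam ^ (2 + ρ) * |ξ ω| ^ (2 + ρ) := by
      rw [abs_mul, abs_of_nonneg hlam, Real.mul_rpow hlam (abs_nonneg _)]
    have htaylor := Real.exp_le_quadratic_add_abs_rpow_mul_exp_max hρ0 hρ1 (lam * ξ ω)
    rw [hrem, mul_assoc] at htaylor
    have hweight := mul_le_mul_of_nonneg_left (hξg ω) (Real.rpow_nonneg hlam (2 + ρ))
    linarith
  have h1 : Integrable (fun ω => 1 + lam * ξ ω) μ := (integrable_const 1).add (hξ.const_mul lam)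
  have h2 : Integrable (fun ω => 1 + lam * ξ ω + lam ^ 2 / 2 * ξ ω ^ 2) μ :=
    h1.add (hsq.const_mul _)
  have h3 : Integrable (fun ω => 1 + lam * ξ ω + lam ^ 2 / 2 * ξ ω ^ 2 + lam ^ (2 + ρ) * g ω) μ :=
    h2.add (hg.const_mul _)
  filter_upwards [condExp_mono (m := m) hexp h3 (ae_of_all μ hpointwise),
    condExp_add_const_mul (m := m) h2 hg (lam ^ (2 + ρ)),
    condExp_add_const_mul (m := m) h1 hsq (lam ^ 2 / 2),
    condExp_add_const_mul (m := m) (integrable_const 1) hξ lam] with ω hmono e3 e2 e1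
  rwa [e3, e2, e1, condExp_const hm] at hmono

end MeasureTheory

theorem condExp_exp_le
    {Ω : Type*} {m0 : MeasurableSpace Ω} (μ : Measure Ω) [IsProbabilityMeasure μ]
    (G : MeasurableSpace Ω) (hG : G ≤ m0)
    (ξ : Ω → ℝ) (ρ ε : ℝ) (hρ0 : 0 < ρ) (hρ1 : ρ ≤ 1) (hε : 0 < ε)
    (hint : Integrable ξ μ) (hmd : μ[ξ|G] =ᵐ[μ] 0)
    (hintsq : Integrable (fun ω => (ξ ω) ^ 2) μ)
    (hintA1 : Integrable (fun ω => |ξ ω| ^ (2 + ρ) * Real.exp (max (ξ ω) 0 / ε)) μ)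
    (hA1 : ∀ᵐ ω ∂μ,
      (μ[fun ω => |ξ ω| ^ (2 + ρ) * Real.exp (max (ξ ω) 0 / ε)|G]) ω
        ≤ ε ^ ρ * (μ[fun ω => (ξ ω) ^ 2|G]) ω)
    (lam : ℝ) (hlam0 : 0 ≤ lam) (hlam1 : lam ≤ 1 / ε)
    (hintexp : Integrable (fun ω => Real.exp (lam * ξ ω)) μ) :
    ∀ᵐ ω ∂μ,
      (μ[fun ω => Real.exp (lam * ξ ω)|G]) ω
          ≤ 1 + (lam ^ 2 / 2 + lam ^ (2 + ρ) * ε ^ ρ) * (μ[fun ω => (ξ ω) ^ 2|G]) ω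
        ∧ 1 + (lam ^ 2 / 2 + lam ^ (2 + ρ) * ε ^ ρ) * (μ[fun ω => (ξ ω) ^ 2|G]) ω
          ≤ 1 + 2 * (lam * ε) ^ 2 := by
  have hlamε : lam * ε ≤ 1 := (le_div_iff₀ hε).1 hlam1
  have hX := condExp_sq_le_sq_of_condExp_rpow_le hG hρ0 hε hintsq hintA1
    (fun ω => le_mul_of_one_le_right (Real.rpow_nonneg (abs_nonneg _) _)
      (Real.one_le_exp (by positivity))) hA1
  have hE := condExp_exp_const_mul_le hG hρ0.le hρ1 hlam0 hint hintsq hintA1 hintexp fun ω => by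
    have : max (lam * ξ ω) 0 ≤ max (ξ ω) 0 / ε :=
      calc max (lam * ξ ω) 0 = lam * max (ξ ω) 0 := by rw [mul_max_of_nonneg _ _ hlam0, mul_zero]
        _ ≤ 1 / ε * max (ξ ω) 0 := by gcongr
        _ = max (ξ ω) 0 / ε := one_div_mul_eq_div _ _
    gcongr
  have hcoef := Real.rpow_two_add_mul_rpow_le_sq hρ0.le hlam0 hε.le hlamε
  have hlamρ : 0 ≤ lam ^ (2 + ρ) := Real.rpow_nonneg hlam0 _
  filter_upwards [hE, hX, hA1, hmd] with ω hE hX hA hmd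
  rw [hmd, Pi.zero_apply, mul_zero, add_zero] at hE
  constructor
  · linarith [mul_le_mul_of_nonneg_left hA hlamρ]
  · calc 1 + (lam ^ 2 / 2 + lam ^ (2 + ρ) * ε ^ ρ) * μ[fun ω => ξ ω ^ 2|G] ω
        ≤ 1 + (lam ^ 2 / 2 + lam ^ (2 + ρ) * ε ^ ρ) * ε ^ 2 := by gcongr
      _ ≤ 1 + (lam ^ 2 / 2 + lam ^ 2) * ε ^ 2 := by gcongr
      _ ≤ 1 + 2 * (lam * ε) ^ 2 := by nlinarith [sq_nonneg (lam * ε)]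
end

section
/- Let ξ be a random variable with E[ξ | 𝒢] = 0 and |ξ| ≤ γ almost surely, where 0 < γ ≤ (1/2)e^{-1/ρ} and ρ ∈ (0,1]. Then ξ satisfies E[|ξ|^{2+ρ} e^{ξ⁺/ε} | 𝒢] ≤ ε^ρ E[ξ² | 𝒢] a.s. with ε = e^{1/ρ} γ. -/
open MeasureTheory

theorem bounded_implies_sakhanenko
    {Ω : Type*} (G : MeasurableSpace Ω) {m0 : MeasurableSpace Ω} (μ : Measure Ω) [IsProbabilityMeasure μ]
    (hG : G ≤ m0)
    (ξ : Ω → ℝ) (hmeas : AEStronglyMeasurable ξ μ)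
    (ρ γ : ℝ) (hρ0 : 0 < ρ) (hρ1 : ρ ≤ 1)
    (hγ0 : 0 < γ) (hγ1 : γ ≤ (1 / 2) * Real.exp (-(1 / ρ)))
    (hcond : μ[ξ|G] =ᵐ[μ] 0)
    (hbound : ∀ᵐ ω ∂μ, |ξ ω| ≤ γ) :
    ∀ᵐ ω ∂μ,
      (μ[fun ω => |ξ ω| ^ (2 + ρ) *
          Real.exp (max (ξ ω) 0 / (Real.exp (1 / ρ) * γ))|G]) ω
        ≤ (Real.exp (1 / ρ) * γ) ^ ρ * (μ[fun ω => (ξ ω) ^ 2|G]) ω := by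
  set ε : ℝ := Real.exp (1 / ρ) * γ with hεdef
  have hε0 : 0 < ε := mul_pos (Real.exp_pos _) hγ0
  set f : Ω → ℝ := fun ω => |ξ ω| ^ (2 + ρ) * Real.exp (max (ξ ω) 0 / ε) with hfdef
  set g : Ω → ℝ := fun ω => (ξ ω) ^ 2 with hgdef
  have hερ : ε ^ ρ = Real.exp 1 * γ ^ ρ := by
    rw [hεdef, Real.mul_rpow (Real.exp_pos _).le hγ0.le, ← Real.exp_one_rpow (1 / ρ),
      ← Real.rpow_mul (Real.exp_pos 1).le, one_div_mul_cancel hρ0.ne', Real.rpow_one]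
  -- pointwise bound
  have hpt : ∀ᵐ ω ∂μ, f ω ≤ ε ^ ρ * g ω := by
    filter_upwards [hbound] with ω hω
    have h0 : (0:ℝ) ≤ |ξ ω| := abs_nonneg _
    have h1 : |ξ ω| ^ (2 + ρ) = (ξ ω) ^ 2 * |ξ ω| ^ ρ := by
      rw [Real.rpow_add' h0 (by positivity),
        show ((2:ℝ) = ((2:ℕ):ℝ)) by norm_num, Real.rpow_natCast, sq_abs]
    have h2 : |ξ ω| ^ ρ ≤ γ ^ ρ := Real.rpow_le_rpow h0 hω hρ0.le
    have h3 : Real.exp (max (ξ ω) 0 / ε) ≤ Real.exp 1 := by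
      apply Real.exp_le_exp.mpr
      have hm : max (ξ ω) 0 ≤ γ := max_le ((le_abs_self _).trans hω) hγ0.le
      have : max (ξ ω) 0 / ε ≤ γ / ε := by gcongr
      refine this.trans ?_
      rw [hεdef, div_le_one hε0]
      nlinarith [Real.one_le_exp (le_of_lt (by positivity : (0:ℝ) < 1 / ρ))]
    calc f ω = ((ξ ω) ^ 2 * |ξ ω| ^ ρ) * Real.exp (max (ξ ω) 0 / ε) := by
          rw [hfdef]; simp only [h1]
      _ ≤ ((ξ ω) ^ 2 * γ ^ ρ) * Real.exp 1 := by
          apply mul_le_mul (by nlinarith [sq_nonneg (ξ ω)]) h3 (Real.exp_pos _).le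
          positivity
      _ = ε ^ ρ * g ω := by rw [hερ, hgdef]; ring
  have hf_nonneg : ∀ ω, 0 ≤ f ω := fun ω => by
    rw [hfdef]; positivity
  have hg_bound : ∀ᵐ ω ∂μ, ‖g ω‖ ≤ γ ^ 2 := by
    filter_upwards [hbound] with ω hω
    have h : ‖g ω‖ = |ξ ω| ^ 2 := by
      rw [hgdef]; simp [Real.norm_eq_abs, abs_of_nonneg (sq_nonneg (ξ ω)), sq_abs]
    rw [h]
    gcongr

  have hg_meas : AEStronglyMeasurable g μ := hmeas.pow 2
  have hg_int : Integrable g μ := Integrable.mono' (integrable_const (γ ^ 2)) hg_meas hg_bound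
  have hf_meas : AEStronglyMeasurable f μ := by
    have c1 : Continuous (fun x : ℝ => |x| ^ (2 + ρ)) :=
      (Real.continuous_rpow_const (by positivity)).comp continuous_abs
    have c2 : Continuous (fun x : ℝ => Real.exp (max x 0 / ε)) :=
      Real.continuous_exp.comp ((continuous_id.max continuous_const).div_const ε)
    exact (c1.comp_aestronglyMeasurable hmeas).mul (c2.comp_aestronglyMeasurable hmeas)
  have hf_int : Integrable f μ := by
    refine Integrable.mono' (integrable_const (ε ^ ρ * γ ^ 2)) hf_meas ?_
    filter_upwards [hpt, hg_bound] with ω h1 h2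
    rw [Real.norm_eq_abs, abs_of_nonneg (hf_nonneg ω)]
    refine h1.trans ?_
    have : g ω ≤ γ ^ 2 := (le_abs_self _).trans h2
    have hε' : 0 ≤ ε ^ ρ := by positivity
    nlinarith
  have hmono := condExp_mono (m := G) hf_int (hg_int.const_mul (ε ^ ρ)) hpt
  have hsmul := condExp_smul (m := G) (m₀ := m0) (μ := μ) (ε ^ ρ) g
  filter_upwards [hmono, hsmul] with ω h1 h2
  calc (μ[f|G]) ω ≤ (μ[(fun ω => ε ^ ρ * g ω)|G]) ω := h1
    _ = ε ^ ρ * (μ[g|G]) ω := by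
        have : (fun ω => ε ^ ρ * g ω) = (ε ^ ρ) • g := by
          funext ω; simp [smul_eq_mul]
        rw [this, h2]; simp [smul_eq_mul]
end

section
/- Let 0 < γ, τ ≤ (1/2)e^{-1/ρ} with ρ ∈ (0,1], and let ξ be a random variable with E[ξ | 𝒢] = 0, ξ ≤ γ a.s., and E[|ξ|^{2+ρ} | 𝒢] ≤ τ^ρ E[ξ² | 𝒢] a.s. Then ξ satisfies E[|ξ|^{2+ρ} e^{ξ⁺/ε} | 𝒢] ≤ ε^ρ E[ξ² | 𝒢] a.s. with ε = max{γ, e^{1/ρ} τ}. -/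
open MeasureTheory

theorem one_sided_bounded_implies_sakhanenko
    {Ω : Type*} (G : MeasurableSpace Ω) {m0 : MeasurableSpace Ω} (μ : Measure Ω) [IsProbabilityMeasure μ]
    (hG : G ≤ m0)
    (ξ : Ω → ℝ) (hmeas : AEStronglyMeasurable ξ μ)
    (ρ γ τ : ℝ) (hρ0 : 0 < ρ) (hρ1 : ρ ≤ 1)
    (hγ0 : 0 < γ) (hγ1 : γ ≤ (1 / 2) * Real.exp (-(1 / ρ)))
    (hτ0 : 0 < τ) (hτ1 : τ ≤ (1 / 2) * Real.exp (-(1 / ρ)))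
    (hcond : μ[ξ|G] =ᵐ[μ] 0)
    (hbound : ∀ᵐ ω ∂μ, ξ ω ≤ γ)
    (hintsq : Integrable (fun ω => (ξ ω) ^ 2) μ)
    (hintmom : Integrable (fun ω => |ξ ω| ^ (2 + ρ)) μ)
    (hmom : ∀ᵐ ω ∂μ,
      (μ[fun ω => |ξ ω| ^ (2 + ρ)|G]) ω ≤ τ ^ ρ * (μ[fun ω => (ξ ω) ^ 2|G]) ω) :
    ∀ᵐ ω ∂μ,
      (μ[fun ω => |ξ ω| ^ (2 + ρ) *
          Real.exp (max (ξ ω) 0 / max γ (Real.exp (1 / ρ) * τ))|G]) ω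
        ≤ (max γ (Real.exp (1 / ρ) * τ)) ^ ρ * (μ[fun ω => (ξ ω) ^ 2|G]) ω := by
  set ε : ℝ := max γ (Real.exp (1 / ρ) * τ) with hε
  have hε0 : 0 < ε := lt_of_lt_of_le hγ0 (le_max_left _ _)
  set f : Ω → ℝ := fun ω => |ξ ω| ^ (2 + ρ) * Real.exp (max (ξ ω) 0 / ε) with hf
  set g : Ω → ℝ := fun ω => Real.exp 1 * |ξ ω| ^ (2 + ρ) with hg
  -- pointwise bound f ≤ g a.e.
  have hfg : ∀ᵐ ω ∂μ, f ω ≤ g ω := by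
    filter_upwards [hbound] with ω hω
    have hmax : max (ξ ω) 0 ≤ ε :=
      max_le (hω.trans (le_max_left _ _)) hε0.le
    have hdiv : max (ξ ω) 0 / ε ≤ 1 := by
      rw [div_le_one hε0]; exact hmax
    have hexp : Real.exp (max (ξ ω) 0 / ε) ≤ Real.exp 1 := Real.exp_le_exp.mpr hdiv
    have hro : (0:ℝ) ≤ |ξ ω| ^ (2 + ρ) := Real.rpow_nonneg (abs_nonneg _) _
    calc f ω = |ξ ω| ^ (2 + ρ) * Real.exp (max (ξ ω) 0 / ε) := rfl
      _ ≤ |ξ ω| ^ (2 + ρ) * Real.exp 1 := mul_le_mul_of_nonneg_left hexp hro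
      _ = g ω := by ring
  have hf_nonneg : ∀ᵐ ω ∂μ, 0 ≤ f ω :=
    Filter.Eventually.of_forall fun ω =>
      mul_nonneg (Real.rpow_nonneg (abs_nonneg _) _) (Real.exp_pos _).le
  -- measurability of f
  have hξ : AEMeasurable ξ μ := hmeas.aemeasurable
  have hcont : Continuous fun x : ℝ => |x| ^ (2 + ρ) :=
    continuous_iff_continuousAt.mpr fun x =>
      (Real.continuousAt_rpow_const |x| (2 + ρ) (Or.inr (by positivity))).comp
        continuous_abs.continuousAt
  have h2 : AEMeasurable (fun ω => |ξ ω| ^ (2 + ρ)) μ :=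
    hcont.measurable.comp_aemeasurable hξ
  have h3 : AEMeasurable (fun ω => Real.exp (max (ξ ω) 0 / ε)) μ :=
    Real.measurable_exp.comp_aemeasurable ((hξ.max aemeasurable_const).div aemeasurable_const)
  have hf_meas : AEStronglyMeasurable[m0] f μ := (h2.mul h3).aestronglyMeasurable
  have hg_int : Integrable g μ := hintmom.const_mul _
  have hf_int : Integrable f μ := by
    refine hg_int.mono' hf_meas ?_
    filter_upwards [hfg, hf_nonneg] with ω h1 h2
    rwa [Real.norm_eq_abs, abs_of_nonneg h2]
  -- conditional expectation comparisons
  have hce1 : μ[f|G] ≤ᵐ[μ] μ[g|G] := condExp_mono hf_int hg_int hfg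
  have hce2 : μ[g|G] =ᵐ[μ] fun ω => Real.exp 1 * (μ[fun ω => |ξ ω| ^ (2 + ρ)|G]) ω := by
    have := condExp_smul (μ := μ) (m := G) (Real.exp 1) (fun ω => |ξ ω| ^ (2 + ρ))
    simpa [hg, Pi.smul_def, smul_eq_mul] using this
  have hsq_nonneg : 0 ≤ᵐ[μ] μ[fun ω => (ξ ω) ^ 2|G] :=
    condExp_nonneg (Filter.Eventually.of_forall fun ω => sq_nonneg _)
  -- key scalar inequality : exp 1 * τ ^ ρ ≤ ε ^ ρ
  have hkey : Real.exp 1 * τ ^ ρ ≤ ε ^ ρ := by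
    have h1 : Real.exp 1 * τ ^ ρ = (Real.exp (1 / ρ) * τ) ^ ρ := by
      rw [Real.mul_rpow (Real.exp_pos _).le hτ0.le, ← Real.exp_one_rpow (1 / ρ),
        ← Real.rpow_mul (Real.exp_pos 1).le, one_div_mul_cancel hρ0.ne', Real.rpow_one]
    rw [h1]
    exact Real.rpow_le_rpow (by positivity) (le_max_right _ _) hρ0.le
  filter_upwards [hce1, hce2, hmom, hsq_nonneg] with ω h1 h2 h3 h4
  calc (μ[f|G]) ω ≤ (μ[g|G]) ω := h1
    _ = Real.exp 1 * (μ[fun ω => |ξ ω| ^ (2 + ρ)|G]) ω := h2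
    _ ≤ Real.exp 1 * (τ ^ ρ * (μ[fun ω => (ξ ω) ^ 2|G]) ω) :=
        mul_le_mul_of_nonneg_left h3 (Real.exp_pos _).le
    _ = (Real.exp 1 * τ ^ ρ) * (μ[fun ω => (ξ ω) ^ 2|G]) ω := by ring
    _ ≤ ε ^ ρ * (μ[fun ω => (ξ ω) ^ 2|G]) ω := mul_le_mul_of_nonneg_right hkey h4
end
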